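/- As ξ → ∞, √ξ·W(ξ) tends to 1/√π, where W = W₀ − W₁. Hence the decaying solution of the Caputo fractional reaction equation D^{3/2}_* V = V with V(0) = 1, V'(0) = −1 decays algebraically like ξ^{−1/2} = ξ^{α−1} (for α = 1/2) as ξ → ∞, and is not exponentially decaying. -/

import Mathlib

/-- `W₀(ξ) = Σ_{k=0}^∞ ξ^{3k/2}/Γ(3k/2 + 1)` (real powers `Real.rpow`). -/
noncomputable def W0 (ξ : ℝ) : ℝ :=
  ∑' k : ℕ, ξ ^ (3 * (k : ℝ) / 2) / Real.Gamma (3 * (k : ℝ) / 2 + 1)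

/-- `W₁(ξ) = Σ_{k=0}^∞ ξ^{3k/2+1}/Γ(3k/2 + 2)` (real powers `Real.rpow`). -/
noncomputable def W1 (ξ : ℝ) : ℝ :=
  ∑' k : ℕ, ξ ^ (3 * (k : ℝ) / 2 + 1) / Real.Gamma (3 * (k : ℝ) / 2 + 2)

/-- `W = W₀ − W₁`. -/
noncomputable def W (ξ : ℝ) : ℝ := W0 ξ - W1 ξ

namespace Stmt14
open Nat Real Complex MeasureTheory Filter Set

open Nat Real Complex MeasureTheory

noncomputable def om : ℂ := ⟨-1/2, Real.sqrt 3 / 2⟩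
lemma sq3 : Real.sqrt 3 ^ 2 = 3 := Real.sq_sqrt (by norm_num)
lemma om_re : om.re = -1/2 := rfl
lemma om_im : om.im = Real.sqrt 3 / 2 := rfl
lemma om_cube : om ^ 3 = 1 := by
  apply Complex.ext <;>
    simp only [om, pow_succ, pow_zero, one_mul, Complex.mul_re, Complex.mul_im,
      Complex.one_re, Complex.one_im]
  · linear_combination (3/8) * sq3
  · linear_combination (-(Real.sqrt 3)/8) * sq3
lemma om_pow (m : ℕ) : om ^ m = om ^ (m % 3) := by
  conv_lhs => rw [← Nat.div_add_mod m 3, pow_add, pow_mul, om_cube, one_pow, one_mul]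
lemma om_sq_re : (om^2).re = -1/2 := by
  simp only [pow_two, Complex.mul_re, om_re, om_im]; linear_combination (-1/4) * sq3
lemma om_sq_im : (om^2).im = -(Real.sqrt 3 / 2) := by
  simp only [pow_two, Complex.mul_im, om_re, om_im]; ring

noncomputable def aC (m : ℕ) : ℝ := 2/3 * ((1 - om^2) * om^m).re
noncomputable def cC (m : ℕ) : ℝ := 2 / Real.sqrt 3 * (om^m).im

lemma sqrt3_pos : (0:ℝ) < Real.sqrt 3 := Real.sqrt_pos.mpr (by norm_num)

lemma aC_eq (m : ℕ) :
    aC m = if m % 3 = 0 then 1 else if m % 3 = 1 then -1 else 0 := by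
  have h : m % 3 = 0 ∨ m % 3 = 1 ∨ m % 3 = 2 := by omega
  unfold aC
  rcases h with h|h|h <;> rw [om_pow m, h] <;>
    simp only [pow_zero, pow_one, mul_one, Complex.mul_re, Complex.sub_re, Complex.sub_im,
      Complex.one_re, Complex.one_im, om_re, om_im, om_sq_re, om_sq_im] <;>
    norm_num
  · linarith [sq3]
  · linarith [sq3]

lemma cC_eq (m : ℕ) :
    cC m = if m % 3 = 0 then 0 else if m % 3 = 1 then 1 else -1 := by
  have h : m % 3 = 0 ∨ m % 3 = 1 ∨ m % 3 = 2 := by omega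
  have hs := sqrt3_pos.ne'
  unfold cC
  rcases h with h|h|h <;> rw [om_pow m, h] <;>
    simp only [pow_zero, pow_one, Complex.one_im, om_im, om_sq_im, mul_zero, reduceIte, h] <;>
    norm_num

lemma hasSum_cexp (z : ℂ) : HasSum (fun m : ℕ => z ^ m / m !) (Complex.exp z) := by
  rw [Complex.exp_eq_exp_ℂ]; exact NormedSpace.expSeries_div_hasSum_exp z

lemma hasSum_A (ξ : ℝ) :
    HasSum (fun m : ℕ => aC m * ξ ^ m / m !)
      (2/3 * ((1 - om^2) * Complex.exp (om * ξ)).re) := by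
  have h1 := (((hasSum_cexp (om * ξ)).mul_left (1 - om^2)).mapL Complex.reCLM).mul_left
    (2/3 : ℝ)
  refine h1.congr_fun fun m => ?_
  have he : (1 - om^2) * ((om * (ξ:ℂ))^m / (m ! : ℂ))
      = ((1 - om^2) * om^m) * (((ξ^m / m ! : ℝ) : ℂ)) := by
    push_cast
    ring
  simp only [Complex.reCLM_apply, he, Complex.mul_re, Complex.ofReal_re, Complex.ofReal_im,
    mul_zero, sub_zero, aC]
  ring

lemma hasSum_imexp (u : ℝ) :
    HasSum (fun n : ℕ => (om^n).im * u ^ n / n !)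
      (Real.exp (-u/2) * Real.sin (Real.sqrt 3 * u / 2)) := by
  have h1 := ((hasSum_cexp (om * u)).mapL Complex.imCLM)
  have hre : (om * (u:ℂ)).re = -u/2 := by
    simp [om, Complex.mul_re]; ring
  have him : (om * (u:ℂ)).im = Real.sqrt 3 * u / 2 := by
    simp [om, Complex.mul_im]; ring
  rw [Complex.imCLM_apply, Complex.exp_im, hre, him] at h1
  convert h1 using 2 with n
  have he : (om * (u:ℂ))^n / (n ! : ℂ) = om^n * (((u^n / n ! : ℝ) : ℂ)) := by
    push_cast; ring
  simp only [Complex.imCLM_apply, he, Complex.mul_im, Complex.ofReal_re, Complex.ofReal_im,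
    mul_zero, zero_mul, add_zero]
  ring

lemma cont_pow (n : ℕ) : Continuous (fun t : ℝ => (1 - t^2)^n) := by continuity

lemma I_rec (n : ℕ) :
    (2*(n:ℝ)+3) * ∫ t in (0:ℝ)..1, (1-t^2)^(n+1)
      = (2*(n:ℝ)+2) * ∫ t in (0:ℝ)..1, (1-t^2)^n := by
  have hd : ∀ t ∈ Set.uIcc (0:ℝ) 1,
      HasDerivAt (fun t : ℝ => t * (1-t^2)^(n+1))
        ((2*(n:ℝ)+3) * (1-t^2)^(n+1) - (2*(n:ℝ)+2) * (1-t^2)^n) t := by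
    intro t _
    have h1 : HasDerivAt (fun t : ℝ => (1-t^2)) (-2*t) t := by
      simpa using ((hasDerivAt_pow 2 t).const_sub 1)
    have h2 := h1.pow (n+1)
    simp only [Nat.add_sub_cancel] at h2
    have h3 := (hasDerivAt_id t).mul h2
    refine h3.congr_deriv ?_
    simp only [id_eq, Pi.pow_apply]
    push_cast
    ring
  have hi := intervalIntegral.integral_eq_sub_of_hasDerivAt hd
    (Continuous.intervalIntegrable (by continuity) 0 1)
  rw [intervalIntegral.integral_sub ((Continuous.intervalIntegrable (by continuity) 0 1))
      ((Continuous.intervalIntegrable (by continuity) 0 1)),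
    intervalIntegral.integral_const_mul, intervalIntegral.integral_const_mul] at hi
  norm_num at hi
  linarith [hi]

lemma Gamma_pos_shift (n : ℕ) : 0 < Real.Gamma ((n:ℝ) + 3/2) :=
  Real.Gamma_pos_of_pos (by positivity)

lemma I_eq (n : ℕ) :
    ∫ t in (0:ℝ)..1, (1-t^2)^n
      = Real.sqrt π * n ! / (2 * Real.Gamma ((n:ℝ) + 3/2)) := by
  induction n with
  | zero =>
      have hg : Real.Gamma ((0:ℕ) + 3/2 : ℝ) = Real.sqrt π / 2 := by
        norm_num
        rw [show (3/2 : ℝ) = 1/2 + 1 by norm_num, Real.Gamma_add_one (by norm_num),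
          Real.Gamma_one_half_eq]
        ring
      rw [hg]
      have hπ : Real.sqrt π ≠ 0 := ne_of_gt (Real.sqrt_pos.mpr Real.pi_pos)
      norm_num
      field_simp
  | succ n ih =>
      have hrec := I_rec n
      rw [ih] at hrec
      have hg : Real.Gamma ((n+1:ℕ) + 3/2 : ℝ) = ((n:ℝ) + 3/2) * Real.Gamma ((n:ℝ) + 3/2) := by
        push_cast
        rw [show (n:ℝ) + 1 + 3/2 = ((n:ℝ) + 3/2) + 1 by ring, Real.Gamma_add_one (by positivity)]
      have hpos := Gamma_pos_shift n
      have h23 : (2*(n:ℝ)+3) ≠ 0 := by positivity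
      rw [hg]
      have h2 : (∫ t in (0:ℝ)..1, (1-t^2)^(n+1))
          = (2*(n:ℝ)+2) * (Real.sqrt π * n ! / (2 * Real.Gamma ((n:ℝ) + 3/2))) / (2*(n:ℝ)+3) := by
        rw [eq_div_iff h23]
        linarith [hrec]
      rw [h2]
      push_cast [Nat.factorial_succ]
      field_simp

lemma om_abs_pow (n : ℕ) : ‖om ^ n‖ = 1 := by
  rw [norm_pow]
  have : ‖om‖ = 1 := by
    have : Complex.normSq om = 1 := by
      simp only [Complex.normSq_mk, om]
      nlinarith [sq3]
    rw [Complex.norm_def, this, Real.sqrt_one]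
  rw [this, one_pow]

/-- the interchanged sum: HasSum of B-terms to the integral -/
lemma hasSum_B (ξ : ℝ) (hξ : 0 < ξ) :
    HasSum (fun n : ℕ => cC n * ξ ^ ((n:ℝ) + 1/2) / Real.Gamma ((n:ℝ) + 3/2))
      (4 / (Real.sqrt 3 * Real.sqrt π) * (Real.sqrt ξ *
        ∫ t in Set.Ioc (0:ℝ) 1,
          Real.exp (-(ξ*(1-t^2))/2) * Real.sin (Real.sqrt 3 * (ξ*(1-t^2)) / 2))) := by
  set F : ℕ → ℝ → ℝ := fun n t => (om^n).im * (ξ*(1-t^2))^n / (n ! : ℝ)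
  have hFcont : ∀ n, Continuous (F n) := by
    intro n; unfold F; continuity
  have hFint : ∀ n, IntegrableOn (F n) (Set.Ioc (0:ℝ) 1) := by
    intro n
    exact (hFcont n).integrableOn_Ioc
  have hFbound : ∀ n, ∀ t ∈ Set.Ioc (0:ℝ) 1, ‖F n t‖ ≤ ξ^n / n ! := by
    intro n t ht
    have h1 : (0:ℝ) ≤ 1 - t^2 := by nlinarith [ht.1, ht.2]
    have h2 : 1 - t^2 ≤ 1 := by nlinarith [ht.1]
    have h3 : |(om^n).im| ≤ 1 := by
      calc |(om^n).im| ≤ ‖om^n‖ := Complex.abs_im_le_norm _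
      _ = 1 := om_abs_pow n
    have h4 : (ξ*(1-t^2))^n ≤ ξ^n := by
      apply pow_le_pow_left₀ (by positivity)
      nlinarith [hξ.le]
    have h5 : (0:ℝ) ≤ (ξ*(1-t^2))^n := by positivity
    have h6 : |(om^n).im| * (ξ*(1-t^2))^n ≤ ξ^n := by
      nlinarith [abs_nonneg (om^n).im]
    calc ‖F n t‖ = |(om^n).im| * (ξ*(1-t^2))^n / n ! := by
          simp only [F, Real.norm_eq_abs, abs_div, abs_mul, Nat.abs_cast, _root_.abs_of_nonneg h5]
      _ ≤ ξ^n / n ! := by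
          have hfac : (0:ℝ) < (n ! : ℝ) := by positivity
          exact by gcongr
  have hnn : ∀ n, 0 ≤ ∫ t in Set.Ioc (0:ℝ) 1, ‖F n t‖ :=
    fun n => MeasureTheory.integral_nonneg (fun t => norm_nonneg _)
  have hnorm : ∀ n, (∫ t in Set.Ioc (0:ℝ) 1, ‖F n t‖) ≤ ξ^n / n ! := by
    intro n
    have h1 : (∫ t in Set.Ioc (0:ℝ) 1, ‖F n t‖)
        ≤ ∫ _t in Set.Ioc (0:ℝ) 1, (ξ^n / n ! : ℝ) := by
      apply MeasureTheory.setIntegral_mono_on ((hFint n).norm)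
        (MeasureTheory.integrableOn_const (by simp [Real.volume_Ioc]))
        measurableSet_Ioc
      exact hFbound n
    simpa [Real.volume_Ioc] using h1
  have hsum : Summable (fun n => ∫ t in Set.Ioc (0:ℝ) 1, ‖F n t‖) :=
    Summable.of_nonneg_of_le hnn hnorm (Real.summable_pow_div_factorial ξ)
  have hkey := MeasureTheory.hasSum_integral_of_summable_integral_norm
    (μ := volume.restrict (Set.Ioc (0:ℝ) 1)) (fun n => hFint n) hsum
  have htsum : ∀ t : ℝ, (∑' n, F n t)
      = Real.exp (-(ξ*(1-t^2))/2) * Real.sin (Real.sqrt 3 * (ξ*(1-t^2)) / 2) := by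
    intro t
    exact (hasSum_imexp (ξ*(1-t^2))).tsum_eq
  simp only [htsum] at hkey
  have hint : ∀ n, (∫ t in Set.Ioc (0:ℝ) 1, F n t)
      = (om^n).im * ξ^n / n ! * (Real.sqrt π * n ! / (2 * Real.Gamma ((n:ℝ) + 3/2))) := by
    intro n
    rw [← intervalIntegral.integral_of_le (by norm_num : (0:ℝ) ≤ 1)]
    have heq : ∀ t : ℝ, F n t = ((om^n).im * ξ^n / n !) * (1-t^2)^n := by
      intro t; simp only [F, mul_pow]; ring
    simp only [heq]
    rw [intervalIntegral.integral_const_mul, I_eq]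
  have hkey2 := hkey.mul_left (4 / (Real.sqrt 3 * Real.sqrt π) * Real.sqrt ξ)
  have hfun : (fun n : ℕ => cC n * ξ ^ ((n:ℝ) + 1/2) / Real.Gamma ((n:ℝ) + 3/2))
      = (fun n : ℕ => 4 / (Real.sqrt 3 * Real.sqrt π) * Real.sqrt ξ
          * ∫ t in Set.Ioc (0:ℝ) 1, F n t) := by
    funext n
    rw [hint n]
    unfold cC
    rw [Real.rpow_add hξ, Real.rpow_natCast, ← Real.sqrt_eq_rpow]
    have hΓ := (Gamma_pos_shift n).ne'
    have hfac : ((n ! : ℝ)) ≠ 0 := by positivity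
    have hπ : Real.sqrt π ≠ 0 := ne_of_gt (Real.sqrt_pos.mpr Real.pi_pos)
    have h3 : Real.sqrt 3 ≠ 0 := sqrt3_pos.ne'
    field_simp
    ring
  rw [hfun, ← mul_assoc]
  exact hkey2



noncomputable def gg (u : ℝ) : ℝ := Real.exp (-u/2) * Real.sin (Real.sqrt 3 * u / 2)

lemma gg_cont : Continuous gg := by unfold gg; continuity

lemma gg_abs (u : ℝ) : |gg u| ≤ Real.exp (-u/2) := by
  unfold gg
  rw [abs_mul, abs_of_pos (Real.exp_pos _)]
  nth_rewrite 2 [← mul_one (Real.exp (-u/2))]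
  exact mul_le_mul_of_nonneg_left (abs_sin_le_one _) (Real.exp_pos _).le


/-- the explicit improper integral -/
lemma intI : ∫ s in Set.Ioi (0:ℝ), Real.exp (-s) * Real.sin (Real.sqrt 3 * s)
    = Real.sqrt 3 / 4 := by
  set c := Real.sqrt 3 with hc
  set Φ : ℝ → ℝ := fun s => -(Real.exp (-s) * (Real.sin (c*s) + c * Real.cos (c*s)) / 4) with hΦ
  have hd : ∀ x ∈ Set.Ici (0:ℝ),
      HasDerivAt Φ (Real.exp (-x) * Real.sin (c*x)) x := by
    intro x _
    have h1 : HasDerivAt (fun s : ℝ => Real.exp (-s)) (-Real.exp (-x)) x := by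
      simpa using ((hasDerivAt_id x).neg).exp
    have h2 : HasDerivAt (fun s : ℝ => Real.sin (c*s)) (Real.cos (c*x) * c) x := by
      simpa using ((hasDerivAt_id x).const_mul c).sin
    have h3 : HasDerivAt (fun s : ℝ => Real.cos (c*s)) (-Real.sin (c*x) * c) x := by
      simpa using ((hasDerivAt_id x).const_mul c).cos
    have h4 := (h1.mul (h2.add (h3.const_mul c))).div_const 4 |>.neg
    refine h4.congr_deriv ?_
    simp only [Pi.add_apply]
    have h5 : c^2 = 3 := sq3
    set E := Real.exp (-x) with hE
    set S := Real.sin (c*x) with hS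
    set C := Real.cos (c*x) with hC
    linear_combination (E*S/4) * h5
  have hint : IntegrableOn (fun s => Real.exp (-s) * Real.sin (c*s)) (Set.Ioi (0:ℝ)) := by
    have hb : IntegrableOn (fun x : ℝ => Real.exp (-1*x)) (Set.Ioi (0:ℝ)) :=
      exp_neg_integrableOn_Ioi 0 one_pos
    apply Integrable.mono' hb
    · exact (Continuous.mul (by continuity) (by continuity)).aestronglyMeasurable
    · refine Filter.Eventually.of_forall (fun s => ?_)
      rw [Real.norm_eq_abs, abs_mul, abs_of_pos (Real.exp_pos _), neg_one_mul]
      nth_rewrite 2 [← mul_one (Real.exp (-s))]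
      exact mul_le_mul_of_nonneg_left (abs_sin_le_one _) (Real.exp_pos _).le
  have htend : Tendsto Φ atTop (nhds 0) := by
    have htd : Tendsto (fun s : ℝ => (1+c)/4 * Real.exp (-s)) atTop (nhds 0) := by
      have := (Real.tendsto_exp_neg_atTop_nhds_zero).const_mul ((1+c)/4)
      simpa using this
    refine squeeze_zero_norm (fun s => ?_) htd
    · 
      have hs := Real.exp_pos (-s)
      have h1 : |Real.sin (c*s)| ≤ 1 := abs_sin_le_one _
      have h2 : |Real.cos (c*s)| ≤ 1 := abs_cos_le_one _
      have hcpos : (0:ℝ) ≤ c := Real.sqrt_nonneg 3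
      rw [hΦ, Real.norm_eq_abs]
      simp only []
      rw [abs_neg, abs_div, abs_mul, abs_of_pos (Real.exp_pos _)]
      have h3 : |Real.sin (c*s) + c * Real.cos (c*s)| ≤ 1 + c := by
        calc |Real.sin (c*s) + c * Real.cos (c*s)|
            ≤ |Real.sin (c*s)| + |c * Real.cos (c*s)| := abs_add_le _ _
          _ ≤ 1 + c := by
              rw [abs_mul, _root_.abs_of_nonneg hcpos]
              nlinarith
      have : |(4:ℝ)| = 4 := by norm_num
      rw [this]
      nlinarith
  have key := MeasureTheory.integral_Ioi_of_hasDerivAt_of_tendsto' hd hint htend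
  rw [key, hΦ]
  norm_num


lemma subst_int (ξ : ℝ) (hξ : 0 < ξ) :
    ξ * ∫ t in Set.Ioc (0:ℝ) 1, gg (ξ*(1-t^2))
      = ∫ s in Set.Ioc (0:ℝ) ξ, gg (2*s - s^2/ξ) := by
  have hgc : Continuous (fun t : ℝ => gg (ξ*(1-t^2))) := gg_cont.comp (by continuity)
  have hsub := intervalIntegral.integral_comp_smul_deriv
      (f := fun s : ℝ => 1 - s/ξ) (f' := fun _ => -(1/ξ)) (g := fun t : ℝ => gg (ξ*(1-t^2)))
      (a := 0) (b := ξ)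
      (fun x _ => by simpa using ((hasDerivAt_id x).div_const ξ).const_sub 1)
      continuousOn_const hgc
  have harg : ∀ x : ℝ, ξ*(1-(1-x/ξ)^2) = 2*x - x^2/ξ := by
    intro x; field_simp; ring
  simp only [Function.comp, smul_eq_mul] at hsub
  rw [show (1 - (0:ℝ)/ξ) = 1 by simp, show (1 - ξ/ξ : ℝ) = 0 by rw [div_self hξ.ne']; ring]
    at hsub
  simp only [harg] at hsub
  rw [intervalIntegral.integral_const_mul, intervalIntegral.integral_symm 0 1] at hsub
  have e1 : (∫ t in Set.Ioc (0:ℝ) 1, gg (ξ*(1-t^2)))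
      = ∫ t in (0:ℝ)..1, gg (ξ*(1-t^2)) :=
    (intervalIntegral.integral_of_le (by norm_num)).symm
  have e2 : (∫ s in Set.Ioc (0:ℝ) ξ, gg (2*s - s^2/ξ))
      = ∫ s in (0:ℝ)..ξ, gg (2*s - s^2/ξ) :=
    (intervalIntegral.integral_of_le hξ.le).symm
  rw [e1, e2]
  have hξ' : ξ ≠ 0 := hξ.ne'
  have h3 : (∫ t in (0:ℝ)..1, gg (ξ*(1-t^2)))
      = (1/ξ) * ∫ x in (0:ℝ)..ξ, gg (2*x - x^2/ξ) := by linarith [hsub]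
  rw [h3, ← mul_assoc, mul_one_div, div_self hξ', one_mul]

lemma tendsto_DCT :
    Filter.Tendsto (fun ξ : ℝ => ∫ s in Set.Ioc (0:ℝ) ξ, gg (2*s - s^2/ξ)) atTop
      (nhds (Real.sqrt 3/4)) := by
  set μ := volume.restrict (Set.Ioi (0:ℝ)) with hμ
  have hbound_int : Integrable (fun s : ℝ => Real.exp (-(1/2)*s)) μ :=
    exp_neg_integrableOn_Ioi 0 (by norm_num)
  have hmeas : ∀ ξ : ℝ, AEStronglyMeasurable
      ((Set.Ioc (0:ℝ) ξ).indicator (fun s => gg (2*s - s^2/ξ))) μ := by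
    intro ξ
    exact ((gg_cont.comp (by continuity)).aestronglyMeasurable).indicator measurableSet_Ioc
  have hb : ∀ᶠ ξ : ℝ in atTop, ∀ᵐ s ∂μ,
      ‖(Set.Ioc (0:ℝ) ξ).indicator (fun s => gg (2*s - s^2/ξ)) s‖ ≤ Real.exp (-(1/2)*s) := by
    filter_upwards [eventually_gt_atTop (0:ℝ)] with ξ hξ
    refine (ae_restrict_iff' measurableSet_Ioi).mpr (Filter.Eventually.of_forall fun s hs => ?_)
    by_cases hmem : s ∈ Set.Ioc (0:ℝ) ξ
    · rw [Set.indicator_of_mem hmem, Real.norm_eq_abs]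
      have hd : s^2/ξ ≤ s := by
        rw [div_le_iff₀ hξ]
        nlinarith [hmem.1, hmem.2]
      calc |gg (2*s - s^2/ξ)| ≤ Real.exp (-(2*s - s^2/ξ)/2) := gg_abs _
        _ ≤ Real.exp (-(1/2)*s) := by
            apply Real.exp_le_exp.mpr; linarith
    · rw [Set.indicator_of_notMem hmem, norm_zero]
      exact (Real.exp_pos _).le
  have hlim : ∀ᵐ s ∂μ,
      Filter.Tendsto (fun ξ : ℝ => (Set.Ioc (0:ℝ) ξ).indicator (fun s => gg (2*s - s^2/ξ)) s)
        atTop (nhds (Real.exp (-s) * Real.sin (Real.sqrt 3 * s))) := by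
    refine (ae_restrict_iff' measurableSet_Ioi).mpr (Filter.Eventually.of_forall fun s hs => ?_)
    have h2 : Filter.Tendsto (fun ξ : ℝ => s^2/ξ) atTop (nhds 0) :=
      tendsto_const_nhds.div_atTop Filter.tendsto_id
    have h1 : Filter.Tendsto (fun ξ : ℝ => 2*s - s^2/ξ) atTop (nhds (2*s)) := by
      simpa using tendsto_const_nhds.sub h2
    have h3 := (gg_cont.tendsto (2*s)).comp h1
    have h4 : gg (2*s) = Real.exp (-s) * Real.sin (Real.sqrt 3 * s) := by
      unfold gg
      rw [show -(2*s)/2 = -s by ring, show Real.sqrt 3 * (2*s)/2 = Real.sqrt 3 * s by ring]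
    rw [h4] at h3
    refine h3.congr' ?_
    filter_upwards [eventually_ge_atTop s] with ξ hξ'
    rw [Set.indicator_of_mem (Set.mem_Ioc.mpr ⟨hs, hξ'⟩)]
    rfl
  have hmain := MeasureTheory.tendsto_integral_filter_of_dominated_convergence
    (μ := μ) (l := atTop) (F := fun ξ : ℝ => (Set.Ioc (0:ℝ) ξ).indicator
      (fun s => gg (2*s - s^2/ξ)))
    (f := fun s => Real.exp (-s) * Real.sin (Real.sqrt 3 * s))
    (bound := fun s => Real.exp (-(1/2)*s))
    (Filter.Eventually.of_forall hmeas) hb hbound_int hlim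
  rw [intI] at hmain
  refine hmain.congr (fun ξ => ?_)
  rw [MeasureTheory.integral_indicator measurableSet_Ioc]
  rw [hμ, MeasureTheory.Measure.restrict_restrict measurableSet_Ioc,
    Set.inter_eq_self_of_subset_left Set.Ioc_subset_Ioi_self]

lemma tendsto_J :
    Filter.Tendsto (fun ξ : ℝ => ξ * ∫ t in Set.Ioc (0:ℝ) 1, gg (ξ*(1-t^2))) atTop
      (nhds (Real.sqrt 3/4)) := by
  refine tendsto_DCT.congr' ?_
  filter_upwards [eventually_gt_atTop (0:ℝ)] with ξ hξ
  exact (subst_int ξ hξ).symm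


noncomputable def Aval (ξ : ℝ) : ℝ := 2/3 * ((1 - om^2) * Complex.exp (om * ξ)).re

noncomputable def Bval (ξ : ℝ) : ℝ :=
  4 / (Real.sqrt 3 * Real.sqrt π) * (Real.sqrt ξ *
    ∫ t in Set.Ioc (0:ℝ) 1, gg (ξ*(1-t^2)))

lemma hasSum_B' (ξ : ℝ) (hξ : 0 < ξ) :
    HasSum (fun n : ℕ => cC n * ξ ^ ((n:ℝ) + 1/2) / Real.Gamma ((n:ℝ) + 3/2)) (Bval ξ) := by
  have h := hasSum_B ξ hξ
  unfold Bval gg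
  exact h

lemma tendsto_A :
    Filter.Tendsto (fun ξ : ℝ => Real.sqrt ξ * Aval ξ) Filter.atTop (nhds 0) := by
  have h0 : Filter.Tendsto (fun ξ : ℝ => 2 * (ξ^(1/2:ℝ) * Real.exp (-(1/2)*ξ)))
      Filter.atTop (nhds 0) := by
    have := (tendsto_rpow_mul_exp_neg_mul_atTop_nhds_zero (1/2) (1/2) (by norm_num)).const_mul
      (2:ℝ)
    simpa using this
  refine squeeze_zero_norm' ?_ h0
  filter_upwards [Filter.eventually_ge_atTop (0:ℝ)] with ξ hξ
  have h2 : |((1 - om^2) * Complex.exp (om*ξ)).re| ≤ ‖(1 - om^2) * Complex.exp (om*ξ)‖ :=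
    Complex.abs_re_le_norm _
  have h4 : ‖Complex.exp (om*(ξ:ℂ))‖ = Real.exp (-(1/2)*ξ) := by
    rw [Complex.norm_exp]
    congr 1
    rw [show (om * (ξ:ℂ)).re = -ξ/2 by simp [om, Complex.mul_re]; ring]
    ring
  have h5 : ‖((1:ℂ) - om^2)‖ ≤ 2 := by
    calc ‖(1:ℂ) - om^2‖ ≤ ‖(1:ℂ)‖ + ‖om^2‖ := norm_sub_le _ _
      _ = 2 := by rw [norm_one, om_abs_pow 2]; norm_num
  rw [norm_mul, h4] at h2
  have h6 : |Aval ξ| ≤ 2 * Real.exp (-(1/2)*ξ) := by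
    unfold Aval
    rw [abs_mul]
    have : |(2:ℝ)/3| = 2/3 := by norm_num
    rw [this]
    nlinarith [Real.exp_pos (-(1/2)*ξ), abs_nonneg (((1 - om^2) * Complex.exp (om*ξ)).re),
      norm_nonneg ((1:ℂ) - om^2)]
  rw [Real.norm_eq_abs, abs_mul, _root_.abs_of_nonneg (Real.sqrt_nonneg ξ), Real.sqrt_eq_rpow]
  nlinarith [Real.sqrt_nonneg ξ, Real.exp_pos (-(1/2)*ξ), Real.rpow_nonneg hξ (1/2:ℝ),
    h6, Real.rpow_nonneg hξ ((1:ℝ)/2)]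

lemma W_eq (ξ : ℝ) (hξ : 0 < ξ) : W ξ = Aval ξ + Bval ξ := by
  classical
  set P : ℕ → ℝ := fun m => aC m * ξ^m / m ! with hP
  set Q : ℕ → ℝ := fun m => cC m * ξ^((m:ℝ)+1/2) / Real.Gamma ((m:ℝ)+3/2) with hQ
  have hPsum : HasSum P (Aval ξ) := hasSum_A ξ
  have hQsum : HasSum Q (Bval ξ) := hasSum_B' ξ hξ
  set P0 : ℕ → ℝ := fun m => if m % 3 = 0 then ξ^m / m ! else 0 with hP0
  set P1 : ℕ → ℝ := fun m => if m % 3 = 1 then ξ^m / m ! else 0 with hP1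
  set Q1 : ℕ → ℝ := fun m => if m % 3 = 1 then ξ^((m:ℝ)+1/2) / Real.Gamma ((m:ℝ)+3/2) else 0
    with hQ1
  set Q2 : ℕ → ℝ := fun m => if m % 3 = 2 then ξ^((m:ℝ)+1/2) / Real.Gamma ((m:ℝ)+3/2) else 0
    with hQ2
  have hP0eq : P0 = Set.indicator {m : ℕ | m % 3 = 0} P := by
    funext m
    by_cases h : m % 3 = 0 <;> simp [Set.indicator_apply, hP0, hP, aC_eq, h] <;> try ring
  have hP1eq : P1 = Set.indicator {m : ℕ | m % 3 = 1} (fun m => -P m) := by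
    funext m
    by_cases h : m % 3 = 1 <;> simp [Set.indicator_apply, hP1, hP, aC_eq, h] <;> try ring
  have hQ1eq : Q1 = Set.indicator {m : ℕ | m % 3 = 1} Q := by
    funext m
    by_cases h : m % 3 = 1 <;> simp [Set.indicator_apply, hQ1, hQ, cC_eq, h] <;> try ring
  have hQ2eq : Q2 = Set.indicator {m : ℕ | m % 3 = 2} (fun m => -Q m) := by
    funext m
    by_cases h : m % 3 = 2 <;> simp [Set.indicator_apply, hQ2, hQ, cC_eq, h] <;> try ring
  have hsP0 : Summable P0 := by rw [hP0eq]; exact hPsum.summable.indicator _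
  have hsP1 : Summable P1 := by rw [hP1eq]; exact hPsum.summable.neg.indicator _
  have hsQ1 : Summable Q1 := by rw [hQ1eq]; exact hQsum.summable.indicator _
  have hsQ2 : Summable Q2 := by rw [hQ2eq]; exact hQsum.summable.neg.indicator _
  have hPdec : P = fun m => P0 m - P1 m := by
    funext m
    have h : m % 3 = 0 ∨ m % 3 = 1 ∨ m % 3 = 2 := by omega
    rcases h with h|h|h <;> simp [hP0, hP1, hP, aC_eq, h] <;> try ring
  have hQdec : Q = fun m => Q1 m - Q2 m := by
    funext m
    have h : m % 3 = 0 ∨ m % 3 = 1 ∨ m % 3 = 2 := by omega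
    rcases h with h|h|h <;> simp [hQ1, hQ2, hQ, cC_eq, h] <;> try ring
  have hAval : Aval ξ = (∑' m, P0 m) - (∑' m, P1 m) := by
    refine hPsum.unique ?_
    rw [hPdec]
    exact hsP0.hasSum.sub hsP1.hasSum
  have hBval : Bval ξ = (∑' m, Q1 m) - (∑' m, Q2 m) := by
    refine hQsum.unique ?_
    rw [hQdec]
    exact hsQ1.hasSum.sub hsQ2.hasSum
  -- now the original series
  have hinj0 : Function.Injective (fun j : ℕ => 3*j) := fun a b h => by simp only [] at h; omega
  have hinj1 : Function.Injective (fun j : ℕ => 3*j+1) := fun a b h => by simp only [] at h; omega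
  have hinj2 : Function.Injective (fun j : ℕ => 3*j+2) := fun a b h => by simp only [] at h; omega
  have hv0 : ∀ m : ℕ, m ∉ Set.range (fun j : ℕ => 3*j) → P0 m = 0 := by
    intro m hm
    have h : m % 3 ≠ 0 := fun h => hm ⟨m/3, by simp only []; omega⟩
    simp [hP0, h]
  have hv1 : ∀ m : ℕ, m ∉ Set.range (fun j : ℕ => 3*j+1) → P1 m = 0 := by
    intro m hm
    have h : m % 3 ≠ 1 := fun h => hm ⟨m/3, by simp only []; omega⟩
    simp [hP1, h]
  have hvq1 : ∀ m : ℕ, m ∉ Set.range (fun j : ℕ => 3*j+1) → Q1 m = 0 := by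
    intro m hm
    have h : m % 3 ≠ 1 := fun h => hm ⟨m/3, by simp only []; omega⟩
    simp [hQ1, h]
  have hvq2 : ∀ m : ℕ, m ∉ Set.range (fun j : ℕ => 3*j+2) → Q2 m = 0 := by
    intro m hm
    have h : m % 3 ≠ 2 := fun h => hm ⟨m/3, by simp only []; omega⟩
    simp [hQ2, h]
  -- W0 even part
  have hW0even : HasSum (fun j : ℕ => ξ ^ (3*((2*j : ℕ):ℝ)/2) / Real.Gamma (3*((2*j : ℕ):ℝ)/2 + 1))
      (∑' m, P0 m) := by
    have h1 := (Function.Injective.hasSum_iff hinj0 hv0).mpr hsP0.hasSum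
    refine h1.congr_fun fun j => ?_
    have hmod : (3*j) % 3 = 0 := by omega
    have hexp : 3*((2*j : ℕ):ℝ)/2 = ((3*j : ℕ):ℝ) := by push_cast; ring
    rw [hexp, Real.rpow_natCast, Real.Gamma_nat_eq_factorial]
    simp [hP0, hmod]
  have hW0odd : HasSum (fun j : ℕ =>
      ξ ^ (3*((2*j+1 : ℕ):ℝ)/2) / Real.Gamma (3*((2*j+1 : ℕ):ℝ)/2 + 1))
      (∑' m, Q1 m) := by
    have h1 := (Function.Injective.hasSum_iff hinj1 hvq1).mpr hsQ1.hasSum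
    refine h1.congr_fun fun j => ?_
    have hmod : (3*j+1) % 3 = 1 := by omega
    have hexp : 3*((2*j+1 : ℕ):ℝ)/2 = ((3*j+1 : ℕ):ℝ) + 1/2 := by push_cast; ring
    have hgam : 3*((2*j+1 : ℕ):ℝ)/2 + 1 = ((3*j+1 : ℕ):ℝ) + 3/2 := by push_cast; ring
    rw [hgam, hexp]
    simp [hQ1, hmod]
  have hW0 : W0 ξ = (∑' m, P0 m) + (∑' m, Q1 m) := by
    have h := HasSum.even_add_odd
      (f := fun k : ℕ => ξ ^ (3*(k:ℝ)/2) / Real.Gamma (3*(k:ℝ)/2 + 1)) hW0even hW0odd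
    unfold W0
    exact h.tsum_eq
  have hW1even : HasSum (fun j : ℕ =>
      ξ ^ (3*((2*j : ℕ):ℝ)/2 + 1) / Real.Gamma (3*((2*j : ℕ):ℝ)/2 + 2))
      (∑' m, P1 m) := by
    have h1 := (Function.Injective.hasSum_iff hinj1 hv1).mpr hsP1.hasSum
    refine h1.congr_fun fun j => ?_
    have hmod : (3*j+1) % 3 = 1 := by omega
    have hexp : 3*((2*j : ℕ):ℝ)/2 + 1 = ((3*j+1 : ℕ):ℝ) := by push_cast; ring
    have hgam : 3*((2*j : ℕ):ℝ)/2 + 2 = ((3*j+1 : ℕ):ℝ) + 1 := by push_cast; ring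
    rw [hexp, hgam, Real.rpow_natCast, Real.Gamma_nat_eq_factorial]
    simp [hP1, hmod]
  have hW1odd : HasSum (fun j : ℕ =>
      ξ ^ (3*((2*j+1 : ℕ):ℝ)/2 + 1) / Real.Gamma (3*((2*j+1 : ℕ):ℝ)/2 + 2))
      (∑' m, Q2 m) := by
    have h1 := (Function.Injective.hasSum_iff hinj2 hvq2).mpr hsQ2.hasSum
    refine h1.congr_fun fun j => ?_
    have hmod : (3*j+2) % 3 = 2 := by omega
    have hexp : 3*((2*j+1 : ℕ):ℝ)/2 + 1 = ((3*j+2 : ℕ):ℝ) + 1/2 := by push_cast; ring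
    have hgam : 3*((2*j+1 : ℕ):ℝ)/2 + 2 = ((3*j+2 : ℕ):ℝ) + 3/2 := by push_cast; ring
    rw [hgam, hexp]
    simp [hQ2, hmod]
  have hW1 : W1 ξ = (∑' m, P1 m) + (∑' m, Q2 m) := by
    have h := HasSum.even_add_odd
      (f := fun k : ℕ => ξ ^ (3*(k:ℝ)/2 + 1) / Real.Gamma (3*(k:ℝ)/2 + 2)) hW1even hW1odd
    unfold W1
    exact h.tsum_eq
  unfold W
  rw [hW0, hW1, hAval, hBval]
  ring

end Stmt14

/-- `√ξ · W(ξ) → 1/√π` as `ξ → ∞`: the decaying solution of the Caputo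
fractional reaction equation decays algebraically like `ξ^{−1/2}`. -/
theorem stmt_14 :
    Filter.Tendsto (fun ξ : ℝ => Real.sqrt ξ * W ξ) Filter.atTop
      (nhds (1 / Real.sqrt Real.pi)) := by
  have hA := Stmt14.tendsto_A
  have hB : Filter.Tendsto (fun ξ : ℝ => Real.sqrt ξ * Stmt14.Bval ξ) Filter.atTop
      (nhds (1 / Real.sqrt Real.pi)) := by
    have h1 := Stmt14.tendsto_J.const_mul (4/(Real.sqrt 3 * Real.sqrt Real.pi))
    have h2 : 4/(Real.sqrt 3 * Real.sqrt Real.pi) * (Real.sqrt 3/4) = 1/Real.sqrt Real.pi := by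
      have h3 : Real.sqrt 3 ≠ 0 := Stmt14.sqrt3_pos.ne'
      have hπ : Real.sqrt Real.pi ≠ 0 := ne_of_gt (Real.sqrt_pos.mpr Real.pi_pos)
      field_simp
    rw [h2] at h1
    refine h1.congr' ?_
    filter_upwards [Filter.eventually_ge_atTop (0:ℝ)] with ξ hξ
    unfold Stmt14.Bval
    set I := ∫ t in Set.Ioc (0:ℝ) 1, Stmt14.gg (ξ*(1-t^2)) with hI
    have hss := Real.mul_self_sqrt hξ
    linear_combination (-(4/(Real.sqrt 3 * Real.sqrt Real.pi) * I)) * hss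
  have hsum := hA.add hB
  rw [zero_add] at hsum
  refine hsum.congr' ?_
  filter_upwards [Filter.eventually_gt_atTop (0:ℝ)] with ξ hξ
  rw [Stmt14.W_eq ξ hξ]
  ring
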